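/- arXiv:1205.1566 — 3 statements merged into one kernel-verified Lean document; each statement's English description precedes it below -/
import Mathlib

section
/- Let φ: R → S be a homomorphism of Noetherian rings, M a finitely generated S-module viewed as an R-module via φ. The set of associated primes of M over R is finite. -/
/-!
An associated prime `p = √(Ann_R x)` of `M` over `R` is a minimal prime of
`Ann_R x = φ⁻¹(Ann_S x)`, hence the contraction of a minimal prime `Q` of `Ann_S x`. Since `S`
is Noetherian, such a `Q` is again of the form `Ann_S x'`, i.e. an associated prime of `M` over
`S`. So the associated primes over `R` are contractions of the finitely many over `S`.
-/

open Submodule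

theorem Ideal.mem_minimalPrimes_of_radical_eq {R : Type*} [CommRing R] {I p : Ideal R}
    [p.IsPrime] (h : I.radical = p) : p ∈ I.minimalPrimes := by
  rw [← Ideal.radical_minimalPrimes, h, Ideal.minimalPrimes_eq_subsingleton_self]
  rfl

theorem isAssociatedPrime_of_mem_minimalPrimes_colon {R M : Type*} [CommRing R]
    [IsNoetherianRing R] [AddCommGroup M] [Module R M] {p : Ideal R} {x : M}
    (hp : p ∈ ((⊥ : Submodule R M).colon {x}).minimalPrimes) : IsAssociatedPrime p M :=
  isAssociatedPrime_iff.mpr ⟨hp.isPrime, exists_eq_colon_of_mem_minimalPrimes hp⟩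

section Restriction

variable {R S M : Type*} [CommRing R] [CommRing S] [Algebra R S]
  [AddCommGroup M] [Module S M] [Module R M] [IsScalarTower R S M]

theorem Submodule.comap_colon_bot_singleton (x : M) :
    ((⊥ : Submodule S M).colon {x}).comap (algebraMap R S) = (⊥ : Submodule R M).colon {x} := by
  ext r
  simp only [Ideal.mem_comap, mem_colon_singleton, mem_bot, algebraMap_smul]

theorem IsAssociatedPrime.exists_comap_eq [IsNoetherianRing S] {p : Ideal R}
    (hp : IsAssociatedPrime p M) :
    ∃ Q : Ideal S, IsAssociatedPrime Q M ∧ Q.comap (algebraMap R S) = p := by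
  obtain ⟨hprime, x, hx⟩ := hp
  have hmin : p ∈ (((⊥ : Submodule S M).colon {x}).comap (algebraMap R S)).minimalPrimes := by
    rw [comap_colon_bot_singleton]
    exact Ideal.mem_minimalPrimes_of_radical_eq hx.symm
  obtain ⟨Q, hQ, hQp⟩ := Ideal.exists_minimalPrimes_comap_eq _ p hmin
  exact ⟨Q, isAssociatedPrime_of_mem_minimalPrimes_colon hQ, hQp⟩

theorem associatedPrimes_subset_image_comap [IsNoetherianRing S] :
    associatedPrimes R M ⊆ Ideal.comap (algebraMap R S) '' associatedPrimes S M :=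
  fun _ hp => hp.exists_comap_eq

end Restriction

theorem associatedPrimes_finite_of_finite_over_target_general
    (R S M : Type*) [CommRing R] [CommRing S] [Algebra R S]
    [IsNoetherianRing S]
    [AddCommGroup M] [Module S M] [Module R M] [IsScalarTower R S M]
    [Module.Finite S M] :
    (associatedPrimes R M).Finite :=
  ((associatedPrimes.finite (A := S) (M := M)).image _).subset
    associatedPrimes_subset_image_comap

/-- Let `φ : R → S` be a homomorphism of commutative Noetherian rings
(encoded by `Algebra R S`) and `M` a finitely generated `S`-module, viewed as an `R`-module
via `φ`.  Then the set of associated primes of `M` over `R` is finite. -/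
theorem associatedPrimes_finite_of_finite_over_target
    (R S M : Type*) [CommRing R] [CommRing S] [Algebra R S]
    [IsNoetherianRing R] [IsNoetherianRing S]
    [AddCommGroup M] [Module S M] [Module R M] [IsScalarTower R S M]
    [Module.Finite S M] :
    (associatedPrimes R M).Finite :=
  associatedPrimes_finite_of_finite_over_target_general R S M
end

section
/- Let ℤ[K] = ℤ[x₁,x₂,x₃,x₄]/(x₁x₃, x₂x₄) and set u₁ = x₁ − 2x₃, u₂ = 2x₂ − x₄. Then (u₁, u₂) is not a regular sequence on ℤ[K]: u₁ is a non-zerodivisor on ℤ[K], but u₂ is a zerodivisor on ℤ[K]/(u₁); in fact (2x₂ − x₄)·x₂x₃² = 0 in ℤ[K]/(x₁ − 2x₃) while x₂x₃² ≠ 0 there. -/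
open MvPolynomial Pointwise

namespace Stmt9

/-- The Stanley–Reisner ideal `(x₁x₃, x₂x₄)` of the boundary of a square. -/
noncomputable def I : Ideal (MvPolynomial (Fin 4) ℤ) :=
  Ideal.span {X 0 * X 2, X 1 * X 3}

/-- `u₁ = x₁ - 2x₃`. -/
noncomputable def u₁ : MvPolynomial (Fin 4) ℤ := X 0 - C 2 * X 2
/-- `u₂ = 2x₂ - x₄`. -/
noncomputable def u₂ : MvPolynomial (Fin 4) ℤ := C 2 * X 1 - X 3

/-- The ideal `(x₁x₃, x₂x₄, x₁ - 2x₃)`, so that the quotient is `ℤ[K]/(u₁)`. -/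
noncomputable def J : Ideal (MvPolynomial (Fin 4) ℤ) := I ⊔ Ideal.span {u₁}

/-- An exponent vector is "bad" if the corresponding monomial is divisible by
neither `x₀x₂` nor `x₁x₃`. -/
def Bad (d : Fin 4 →₀ ℕ) : Prop := (d 0 = 0 ∨ d 2 = 0) ∧ (d 1 = 0 ∨ d 3 = 0)

noncomputable def e02 : Fin 4 →₀ ℕ := Finsupp.single 0 1 + Finsupp.single 2 1
noncomputable def e13 : Fin 4 →₀ ℕ := Finsupp.single 1 1 + Finsupp.single 3 1

lemma X02 : (X 0 * X 2 : MvPolynomial (Fin 4) ℤ) = monomial e02 1 := by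
  rw [X, X, monomial_mul, mul_one]; rfl

lemma X13 : (X 1 * X 3 : MvPolynomial (Fin 4) ℤ) = monomial e13 1 := by
  rw [X, X, monomial_mul, mul_one]; rfl

lemma mem_I_iff (q : MvPolynomial (Fin 4) ℤ) :
    q ∈ I ↔ ∀ d, Bad d → coeff d q = 0 := by
  constructor
  · intro hq d hd
    rw [I, Ideal.mem_span_pair] at hq
    obtain ⟨a, b, rfl⟩ := hq
    rw [coeff_add, X02, X13, coeff_mul_monomial', coeff_mul_monomial']
    rw [if_neg, if_neg, add_zero]
    · intro h
      have h1 := h 1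
      have h3 := h 3
      simp [e13, Finsupp.single_apply] at h1 h3
      rcases hd.2 with h' | h' <;> omega
    · intro h
      have h0 := h 0
      have h2 := h 2
      simp [e02, Finsupp.single_apply] at h0 h2
      rcases hd.1 with h' | h' <;> omega
  · intro h
    rw [as_sum q]
    apply Ideal.sum_mem
    intro d hd
    by_cases hbad : Bad d
    · rw [h d hbad, monomial_zero]; exact Ideal.zero_mem _
    · rw [Bad, not_and_or] at hbad
      rcases hbad with hb | hb
      · push_neg at hb
        have : monomial d (coeff d q) = monomial (d - e02) (coeff d q) * (X 0 * X 2) := by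
          have hde : d - e02 + e02 = d := by
            apply Finsupp.ext
            intro i
            rw [Finsupp.add_apply, Finsupp.tsub_apply]
            fin_cases i <;> simp [e02, Finsupp.single_apply] <;> omega
          rw [X02, monomial_mul, mul_one, hde]
        rw [this]
        exact Ideal.mul_mem_left _ _ (Ideal.subset_span (by simp))
      · push_neg at hb
        have : monomial d (coeff d q) = monomial (d - e13) (coeff d q) * (X 1 * X 3) := by
          have hde : d - e13 + e13 = d := by
            apply Finsupp.ext
            intro i
            rw [Finsupp.add_apply, Finsupp.tsub_apply]
            fin_cases i <;> simp [e13, Finsupp.single_apply] <;> omega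
          rw [X13, monomial_mul, mul_one, hde]
        rw [this]
        exact Ideal.mul_mem_left _ _ (Ideal.subset_span (by simp))

lemma u₁_nzd (p : MvPolynomial (Fin 4) ℤ) (h : u₁ * p ∈ I) : p ∈ I := by
  rw [mem_I_iff] at h ⊢
  intro d hd
  by_contra hc
  have hmul : ∀ e, coeff e (u₁ * p) =
      (if 0 ∈ e.support then coeff (e - Finsupp.single 0 1) p else 0)
      - 2 * (if 2 ∈ e.support then coeff (e - Finsupp.single 2 1) p else 0) := by
    intro e
    rw [u₁, sub_mul, mul_assoc, coeff_sub, coeff_C_mul, coeff_X_mul', coeff_X_mul']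
  by_cases h2 : d 2 = 0
  · set e := d + Finsupp.single 0 1 with he
    have hbe : Bad e := by
      constructor
      · right; simp [he, Finsupp.single_apply, h2]
      · rcases hd.2 with h' | h'
        · left; simp [he, Finsupp.single_apply, h']
        · right; simp [he, Finsupp.single_apply, h']
    have := h e hbe
    rw [hmul e] at this
    rw [if_pos, if_neg] at this
    · rw [add_tsub_cancel_right] at this
      omega
    · simp [he, Finsupp.single_apply, h2, Finsupp.mem_support_iff]
    · simp [he, Finsupp.single_apply, Finsupp.mem_support_iff]
  · have h0 : d 0 = 0 := by rcases hd.1 with h' | h' <;> omega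
    set e := d + Finsupp.single 2 1 with he
    have hbe : Bad e := by
      constructor
      · left; simp [he, Finsupp.single_apply, h0]
      · rcases hd.2 with h' | h'
        · left; simp [he, Finsupp.single_apply, h']
        · right; simp [he, Finsupp.single_apply, h']
    have := h e hbe
    rw [hmul e] at this
    rw [if_neg, if_pos] at this
    · rw [add_tsub_cancel_right] at this
      omega
    · simp [he, Finsupp.single_apply, Finsupp.mem_support_iff]
    · simp [he, Finsupp.single_apply, h0, Finsupp.mem_support_iff]

lemma u₁_mem_J : u₁ ∈ J := le_sup_right (a := I) (Ideal.subset_span rfl)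

lemma I_le_J : I ≤ J := le_sup_left

lemma mul_mem_J : u₂ * (X 1 * X 2 ^ 2) ∈ J := by
  have key : u₂ * (X 1 * X 2 ^ 2) =
      X 1 ^ 2 * (X 0 * X 2) - X 2 ^ 2 * (X 1 * X 3) - X 1 ^ 2 * X 2 * u₁ := by
    rw [u₂, u₁]; ring
  rw [key]
  refine Ideal.sub_mem _ (Ideal.sub_mem _ ?_ ?_) ?_
  · exact Ideal.mul_mem_left _ _ (I_le_J (Ideal.subset_span (by simp)))
  · exact Ideal.mul_mem_left _ _ (I_le_J (Ideal.subset_span (by simp)))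
  · exact Ideal.mul_mem_left _ _ u₁_mem_J

/-- The evaluation `x₁ ↦ 2T, x₂ ↦ 1, x₃ ↦ T, x₄ ↦ 0` into `ℤ[T]`. -/
noncomputable def φ : MvPolynomial (Fin 4) ℤ →ₐ[ℤ] Polynomial ℤ :=
  aeval ![2 * Polynomial.X, 1, Polynomial.X, 0]

lemma not_mem_J : X 1 * X 2 ^ 2 ∉ J := by
  intro h
  have hJK : ∀ z ∈ J, φ z ∈ Ideal.span {(2 : Polynomial ℤ) * Polynomial.X ^ 2} := by
    intro z hz
    rw [J, I, ← Ideal.span_union] at hz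
    have : ({X 0 * X 2, X 1 * X 3} ∪ {u₁} : Set (MvPolynomial (Fin 4) ℤ)) ⊆
        (Ideal.span {(2 : Polynomial ℤ) * Polynomial.X ^ 2}).comap φ.toRingHom := by
      rintro x ((rfl | rfl) | rfl) <;>
        simp only [SetLike.mem_coe, Ideal.mem_comap, AlgHom.toRingHom_eq_coe, RingHom.coe_coe]
      · have : φ (X 0 * X 2) = 2 * Polynomial.X ^ 2 := by
          simp [φ]; ring
        rw [this]; exact Ideal.subset_span rfl
      · have : φ (X 1 * X 3) = 0 := by simp [φ]
        rw [this]; exact Ideal.zero_mem _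
      · have : φ u₁ = 0 := by simp [φ, u₁]
        rw [this]; exact Ideal.zero_mem _
    exact Ideal.span_le.mpr this hz
  have hX2 : φ (X 1 * X 2 ^ 2) = Polynomial.X ^ 2 := by simp [φ]
  have := hJK _ h
  rw [hX2, Ideal.mem_span_singleton] at this
  obtain ⟨f, hf⟩ := this
  have hcoeff := congrArg (Polynomial.coeff · 2) hf
  simp only [Polynomial.coeff_X_pow] at hcoeff
  rw [mul_assoc, Polynomial.coeff_ofNat_mul] at hcoeff
  have h2 : (Polynomial.X ^ 2 * f).coeff 2 = f.coeff 0 := by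
    have := Polynomial.coeff_X_pow_mul f 2 0
    simpa using this
  rw [h2] at hcoeff
  simp at hcoeff
  omega

/-- In `ℤ[K] = ℤ[x₁,…,x₄]/(x₁x₃, x₂x₄)` with `u₁ = x₁ - 2x₃` and
`u₂ = 2x₂ - x₄`, the pair `(u₁, u₂)` is not a regular sequence: `u₁` is a non-zerodivisor
on `ℤ[K]`, but in `ℤ[K]/(u₁)` the element `x₂x₃²` is nonzero and is killed by `u₂`. -/
theorem not_regular_sequence :
    IsSMulRegular (MvPolynomial (Fin 4) ℤ ⧸ I) (Ideal.Quotient.mk I u₁) ∧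
    Ideal.Quotient.mk J (X 1 * X 2 ^ 2) ≠ 0 ∧
    Ideal.Quotient.mk J u₂ * Ideal.Quotient.mk J (X 1 * X 2 ^ 2) = 0 ∧
    ¬ RingTheory.Sequence.IsRegular (MvPolynomial (Fin 4) ℤ ⧸ I)
        [Ideal.Quotient.mk I u₁, Ideal.Quotient.mk I u₂] := by
  have reg1 : IsSMulRegular (MvPolynomial (Fin 4) ℤ ⧸ I) (Ideal.Quotient.mk I u₁) := by
    intro a b hab
    obtain ⟨x, rfl⟩ := Ideal.Quotient.mk_surjective a
    obtain ⟨y, rfl⟩ := Ideal.Quotient.mk_surjective b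
    simp only [smul_eq_mul, ← map_mul] at hab
    rw [Ideal.Quotient.eq] at hab ⊢
    have : u₁ * (x - y) ∈ I := by rwa [mul_sub]
    exact u₁_nzd _ this
  refine ⟨reg1, ?_, ?_, ?_⟩
  · rw [ne_eq, Ideal.Quotient.eq_zero_iff_mem]
    exact not_mem_J
  · rw [← map_mul, Ideal.Quotient.eq_zero_iff_mem]
    exact mul_mem_J
  · intro hreg
    rw [RingTheory.Sequence.isRegular_cons_iff] at hreg
    have hs : IsSMulRegular
        (QuotSMulTop (Ideal.Quotient.mk I u₁) (MvPolynomial (Fin 4) ℤ ⧸ I))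
        (Ideal.Quotient.mk I u₂) := by
      have := hreg.2.toIsWeaklyRegular
      rwa [RingTheory.Sequence.isWeaklyRegular_singleton_iff] at this
    have hNmem : ∀ z : MvPolynomial (Fin 4) ℤ,
        (Ideal.Quotient.mk I z ∈ (Ideal.Quotient.mk I u₁ •
          (⊤ : Submodule (MvPolynomial (Fin 4) ℤ ⧸ I) (MvPolynomial (Fin 4) ℤ ⧸ I)))) ↔
        z ∈ J := by
      intro z
      constructor
      · intro hz
        rw [← SetLike.mem_coe, Submodule.coe_pointwise_smul, Set.mem_smul_set] at hz
        obtain ⟨s, -, hs'⟩ := hz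
        obtain ⟨t, rfl⟩ := Ideal.Quotient.mk_surjective s
        rw [smul_eq_mul, ← map_mul] at hs'
        have hmem : u₁ * t - z ∈ I := Ideal.Quotient.eq.mp hs'
        have h1 : u₁ * t ∈ J := Ideal.mul_mem_right _ _ u₁_mem_J
        have h2 : u₁ * t - z ∈ J := I_le_J hmem
        have := Ideal.sub_mem _ h1 h2
        simpa using this
      · intro hz
        rw [J] at hz
        obtain ⟨y, hy, w, hw, rfl⟩ := Submodule.mem_sup.mp hz
        rw [Ideal.mem_span_singleton'] at hw
        obtain ⟨c, rfl⟩ := hw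
        rw [map_add]
        apply Submodule.add_mem
        · have : Ideal.Quotient.mk I y = 0 := Ideal.Quotient.eq_zero_iff_mem.mpr hy
          rw [this]
          exact Submodule.zero_mem _
        · rw [map_mul, mul_comm]
          exact Submodule.smul_mem_pointwise_smul _ _ _ Submodule.mem_top
    have hm0 : (Submodule.Quotient.mk (Ideal.Quotient.mk I (X 1 * X 2 ^ 2)) :
        QuotSMulTop (Ideal.Quotient.mk I u₁) (MvPolynomial (Fin 4) ℤ ⧸ I)) ≠ 0 := by
      rw [ne_eq, Submodule.Quotient.mk_eq_zero]
      exact fun hmem => not_mem_J ((hNmem _).mp hmem)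
    have hkill : (Ideal.Quotient.mk I u₂) •
        (Submodule.Quotient.mk (Ideal.Quotient.mk I (X 1 * X 2 ^ 2)) :
          QuotSMulTop (Ideal.Quotient.mk I u₁) (MvPolynomial (Fin 4) ℤ ⧸ I)) = 0 := by
      rw [← Submodule.Quotient.mk_smul, Submodule.Quotient.mk_eq_zero]
      rw [smul_eq_mul, ← map_mul]
      exact (hNmem _).mpr mul_mem_J
    have heq : (Ideal.Quotient.mk I u₂) •
        (Submodule.Quotient.mk (Ideal.Quotient.mk I (X 1 * X 2 ^ 2)) :
          QuotSMulTop (Ideal.Quotient.mk I u₁) (MvPolynomial (Fin 4) ℤ ⧸ I)) =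
        (Ideal.Quotient.mk I u₂) •
          (0 : QuotSMulTop (Ideal.Quotient.mk I u₁) (MvPolynomial (Fin 4) ℤ ⧸ I)) := by
      rw [hkill, smul_zero]
    exact hm0 (hs heq)

end Stmt9
end

section
/- Let K₂ be the simplicial complex on {1,2,3,4,5} whose faces of dimension one are the edges {1,2},{2,3},{3,4},{4,5},{5,1}, the other pairs being non-faces, so that its Stanley–Reisner ring ℤ[K₂] is ℤ[x₁,…,x₅] modulo the ideal generated by the products x_ix_j over these non-edges, and set u₁ = x₁ − 2x₃ + x₄ and u₂ = 2x₁ − x₄ − x₅. Then (u₁, u₂) is not a regular sequence on ℤ[K₂]: the class of x₂x₃² is nonzero in ℤ[K₂]/(u₁) but is annihilated by u₂. -/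
open MvPolynomial

namespace Stmt16

/-- The Stanley–Reisner ideal of the 5-cycle `K₂` on vertices `1,…,5` (0-indexed): it is
generated by the monomials `x_i x_j` for the non-adjacent pairs
`{1,3}, {1,4}, {2,4}, {2,5}, {3,5}`. -/
noncomputable def I : Ideal (MvPolynomial (Fin 5) ℤ) :=
  Ideal.span {X 0 * X 2, X 0 * X 3, X 1 * X 3, X 1 * X 4, X 2 * X 4}

/-- `u₁ = x₁ - 2x₃ + x₄`. -/
noncomputable def u₁ : MvPolynomial (Fin 5) ℤ := X 0 - C 2 * X 2 + X 3
/-- `u₂ = 2x₁ - x₄ - x₅`. -/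
noncomputable def u₂ : MvPolynomial (Fin 5) ℤ := C 2 * X 0 - X 3 - X 4

/-- The ideal defining `ℤ[K₂]/(u₁)`. -/
noncomputable def J : Ideal (MvPolynomial (Fin 5) ℤ) := I ⊔ Ideal.span {u₁}

/-- A test ring homomorphism sending `x₁, x₄, x₅ ↦ 0`, `x₂ ↦ s`, `x₃ ↦ t`,
with values in polynomials over `ZMod 2`. -/
noncomputable def φ : MvPolynomial (Fin 5) ℤ →+* MvPolynomial (Fin 2) (ZMod 2) :=
  (aeval ![0, X 0, X 1, 0, 0]).toRingHom

lemma J_le_ker : J ≤ RingHom.ker φ := by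
  rw [J, I, sup_le_iff]
  constructor <;> rw [Ideal.span_le] <;> intro p hp
  · simp only [Set.mem_insert_iff, Set.mem_singleton_iff] at hp
    rcases hp with h | h | h | h | h <;> subst h <;>
      simp [φ, RingHom.mem_ker, Matrix.cons_val_zero, Matrix.cons_val_one]
  · simp only [Set.mem_singleton_iff] at hp
    subst hp
    have h2 : ((2 : ℤ) : MvPolynomial (Fin 2) (ZMod 2)) = 0 := by
      push_cast
      exact CharTwo.two_eq_zero
    simp [φ, u₁, RingHom.mem_ker, h2, CharTwo.two_eq_zero]

lemma m_not_mem_J : X 1 * X 2 ^ 2 ∉ J := by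
  intro h
  have h0 : φ (X 1 * X 2 ^ 2) = 0 := J_le_ker h
  have : φ (X 1 * X 2 ^ 2) = X 0 * X 1 ^ 2 := by
    simp [φ]
  rw [this] at h0
  exact mul_ne_zero (X_ne_zero 0) (pow_ne_zero 2 (X_ne_zero 1)) h0

lemma u₂_mul_mem_I : u₂ * (X 1 * X 2 ^ 2) ∈ I := by
  have key : u₂ * (X 1 * X 2 ^ 2) =
      (C 2 * X 1 * X 2) * (X 0 * X 2) - (X 2 ^ 2) * (X 1 * X 3)
        - (X 2 ^ 2) * (X 1 * X 4) := by
    rw [u₂]; ring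
  rw [key, I]
  refine sub_mem (sub_mem ?_ ?_) ?_ <;>
    exact Ideal.mul_mem_left _ _ (Ideal.subset_span (by simp))

/-- In the Stanley–Reisner ring `ℤ[K₂]` of the 5-cycle, with
`u₁ = x₁ - 2x₃ + x₄` and `u₂ = 2x₁ - x₄ - x₅`, the pair `(u₁, u₂)` is not a regular
sequence: the class of `x₂x₃²` is nonzero in `ℤ[K₂]/(u₁)` but is annihilated by `u₂`. -/
theorem not_regular_sequence :
    Ideal.Quotient.mk J (X 1 * X 2 ^ 2) ≠ 0 ∧
    Ideal.Quotient.mk J u₂ * Ideal.Quotient.mk J (X 1 * X 2 ^ 2) = 0 ∧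
    ¬ RingTheory.Sequence.IsRegular (MvPolynomial (Fin 5) ℤ ⧸ I)
        [Ideal.Quotient.mk I u₁, Ideal.Quotient.mk I u₂] := by
  refine ⟨?_, ?_, ?_⟩
  · rw [Ne, Ideal.Quotient.eq_zero_iff_mem]
    exact m_not_mem_J
  · rw [← map_mul, Ideal.Quotient.eq_zero_iff_mem]
    exact Ideal.mem_sup_left u₂_mul_mem_I
  · intro h
    have hw := h.toIsWeaklyRegular
    rw [RingTheory.Sequence.isWeaklyRegular_cons_iff] at hw
    have hw2 := hw.2
    rw [RingTheory.Sequence.isWeaklyRegular_cons_iff] at hw2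
    have hb : IsSMulRegular
        (QuotSMulTop (Ideal.Quotient.mk I u₁) (MvPolynomial (Fin 5) ℤ ⧸ I))
        (Ideal.Quotient.mk I u₂) := hw2.1
    set m' : QuotSMulTop (Ideal.Quotient.mk I u₁) (MvPolynomial (Fin 5) ℤ ⧸ I) :=
      Submodule.Quotient.mk (Ideal.Quotient.mk I (X 1 * X 2 ^ 2)) with hm'
    have hzero : (Ideal.Quotient.mk I u₂) • m' = 0 := by
      rw [hm', ← Submodule.Quotient.mk_smul]
      have : (Ideal.Quotient.mk I u₂) • (Ideal.Quotient.mk I (X 1 * X 2 ^ 2))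
          = Ideal.Quotient.mk I (u₂ * (X 1 * X 2 ^ 2)) := by
        rw [smul_eq_mul, ← map_mul]
      rw [this, Ideal.Quotient.eq_zero_iff_mem.mpr u₂_mul_mem_I,
        Submodule.Quotient.mk_zero]
    have : m' = 0 := hb (by simpa using hzero)
    rw [hm', Submodule.Quotient.mk_eq_zero] at this
    rw [← SetLike.mem_coe, Submodule.coe_pointwise_smul] at this
    obtain ⟨y, -, hy⟩ := Set.mem_smul_set.mp this
    obtain ⟨p, rfl⟩ := Ideal.Quotient.mk_surjective y
    apply m_not_mem_J
    rw [smul_eq_mul] at hy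
    have hdiff : X 1 * X 2 ^ 2 - u₁ * p ∈ I := by
      rw [← Ideal.Quotient.eq_zero_iff_mem, map_sub, map_mul _ u₁ p, hy, sub_self]
    have : X 1 * X 2 ^ 2 = (X 1 * X 2 ^ 2 - u₁ * p) + u₁ * p := by ring
    rw [this, J]
    exact add_mem (Ideal.mem_sup_left hdiff)
      (Ideal.mem_sup_right (Ideal.mul_mem_right _ _ (Ideal.subset_span rfl)))
end Stmt16
end
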